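/- Let U be a unitary on a finite-dimensional Hilbert space and J an operator, and let Q₁,…,Q_k be mutually orthogonal nonzero operators each satisfying U†QᵢU = Qᵢ. Then the time-averaged autocorrelation satisfies lim_{t→∞} (1/t) Σ_{τ=1}^{t} ⟨J, U^{−τ} J U^{τ}⟩ ≥ Σᵢ |⟨J,Qᵢ⟩|²/⟨Qᵢ,Qᵢ⟩, where ⟨A,B⟩ = tr(A†B)/d and the limit exists. -/

import Mathlib

open Matrix Filter

/-- Hilbert–Schmidt inner product `⟨A,B⟩ = tr(A†B)/d`. -/
noncomputable def hsInner (d : ℕ) (A B : Matrix (Fin d) (Fin d) ℂ) : ℂ :=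
  Matrix.trace (Aᴴ * B) / d

/-!
Conjugation `X ↦ U† X U` is an isometry of the Hilbert–Schmidt space, so by von Neumann's mean
ergodic theorem the Cesàro averages of `U^{-τ} J U^τ` converge to the orthogonal projection `P J`
of `J` onto the conserved operators, and the averaged autocorrelation converges to `‖P J‖²`.
The `Qᵢ` are orthogonal vectors in that subspace and `⟨J, Qᵢ⟩ = ⟨P J, Qᵢ⟩`, so Bessel's inequality
for `P J` gives the bound.
-/

open Topology

section MeanErgodic
variable {𝕜 E : Type*} [RCLike 𝕜] [NormedAddCommGroup E] [InnerProductSpace 𝕜 E]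

local notation "⟪" x ", " y "⟫" => inner 𝕜 x y

theorem ContinuousLinearMap.norm_iterate_apply_le (f : E →L[𝕜] E) (hf : ‖f‖ ≤ 1) (n : ℕ) (x : E) :
    ‖f^[n] x‖ ≤ ‖x‖ := by
  induction n with
  | zero => rfl
  | succ n ih =>
    rw [Function.iterate_succ_apply']
    exact (f.le_of_opNorm_le hf _).trans (by rwa [one_mul])

-- Starting the orbit at `f v` turns Mathlib's range `0, …, t - 1` into the paper's `1, …, t`.
theorem re_inner_birkhoffAverage_apply (f : E → E) (v : E) (t : ℕ) :
    RCLike.re ⟪v, birkhoffAverage 𝕜 f _root_.id t (f v)⟫ =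
      (t : ℝ)⁻¹ * ∑ τ ∈ Finset.Icc 1 t, RCLike.re ⟪v, f^[τ] v⟫ := by
  have hcast : ((t : 𝕜))⁻¹ = (((t : ℝ)⁻¹ : ℝ) : 𝕜) := by push_cast; rfl
  simp only [birkhoffAverage, birkhoffSum, inner_smul_right, inner_sum, hcast,
    RCLike.re_ofReal_mul, map_sum, id, ← Function.iterate_succ_apply, Nat.succ_eq_add_one]
  rw [Finset.range_eq_Ico, Finset.sum_Ico_add' (fun τ => RCLike.re ⟪v, f^[τ] v⟫), zero_add,
    Finset.Ico_add_one_right_eq_Icc]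

variable [CompleteSpace E]

theorem ContinuousLinearMap.tendsto_birkhoffAverage_apply_starProjection
    (f : E →L[𝕜] E) (hf : ‖f‖ ≤ 1) (x : E) :
    Tendsto (birkhoffAverage 𝕜 f _root_.id · (f x)) atTop
      (𝓝 ((f.eqLocus (1 : E →L[𝕜] E)).starProjection x)) := by
  have hbdd : Bornology.IsBounded (Set.range (_root_.id <| f^[·] x)) :=
    isBounded_iff_forall_norm_le.2 ⟨‖x‖, by
      rintro _ ⟨n, rfl⟩; exact f.norm_iterate_apply_le hf n x⟩
  have h := (tendsto_birkhoffAverage_apply_sub_birkhoffAverage 𝕜 hbdd).add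
      (f.tendsto_birkhoffAverage_orthogonalProjection hf x)
  simp only [sub_add_cancel, zero_add] at h
  exact h

theorem ContinuousLinearMap.tendsto_cesaro_re_inner_iterate
    (f : E →L[𝕜] E) (hf : ‖f‖ ≤ 1) (v : E) :
    Tendsto (fun t : ℕ => (t : ℝ)⁻¹ * ∑ τ ∈ Finset.Icc 1 t, RCLike.re ⟪v, f^[τ] v⟫) atTop
      (𝓝 (‖(f.eqLocus (1 : E →L[𝕜] E)).orthogonalProjectionOnto v‖ ^ 2)) := by
  have hcont : Continuous fun x : E => RCLike.re ⟪v, x⟫ := by fun_prop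
  have h := (hcont.tendsto _).comp (f.tendsto_birkhoffAverage_apply_starProjection hf v)
  simp only [Function.comp_def, re_inner_birkhoffAverage_apply] at h
  rwa [← Submodule.re_inner_starProjection_eq_normSq, inner_re_symm]

end MeanErgodic

section Bessel
variable {𝕜 E ι : Type*} [RCLike 𝕜] [NormedAddCommGroup E] [InnerProductSpace 𝕜 E]

local notation "⟪" x ", " y "⟫" => inner 𝕜 x y

theorem orthonormal_inv_norm_smul {q : ι → E} (hq : ∀ i, q i ≠ 0)
    (horth : Pairwise fun i j => ⟪q i, q j⟫ = 0) :
    Orthonormal 𝕜 fun i => (‖q i‖⁻¹ : 𝕜) • q i :=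
  ⟨fun i => norm_smul_inv_norm (hq i), fun i j hij => by
    simp only [inner_smul_left, inner_smul_right, horth hij, mul_zero]⟩

theorem sum_norm_inner_sq_div_norm_sq_le [Fintype ι] {q : ι → E} (hq : ∀ i, q i ≠ 0)
    (horth : Pairwise fun i j => ⟪q i, q j⟫ = 0) (w : E) :
    ∑ i, ‖⟪w, q i⟫‖ ^ 2 / ‖q i‖ ^ 2 ≤ ‖w‖ ^ 2 := by
  convert (orthonormal_inv_norm_smul hq horth).sum_inner_products_le w (s := Finset.univ) using 2
    with i
  rw [inner_smul_left, norm_mul, RCLike.norm_conj, norm_inv, RCLike.norm_ofReal, abs_norm,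
    norm_inner_symm, div_eq_inv_mul, mul_pow, inv_pow]

theorem sum_norm_inner_sq_div_norm_sq_le_norm_orthogonalProjectionOnto_sq [Fintype ι]
    (K : Submodule 𝕜 E) [K.HasOrthogonalProjection] {q : ι → E} (hqK : ∀ i, q i ∈ K)
    (hq : ∀ i, q i ≠ 0) (horth : Pairwise fun i j => ⟪q i, q j⟫ = 0) (v : E) :
    ∑ i, ‖⟪v, q i⟫‖ ^ 2 / ‖q i‖ ^ 2 ≤ ‖K.orthogonalProjectionOnto v‖ ^ 2 := by
  have hproj : ∀ i, ⟪v, q i⟫ = ⟪K.starProjection v, q i⟫ := fun i => by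
    rw [K.inner_starProjection_left_eq_right, K.starProjection_eq_self_iff.2 (hqK i)]
  simpa only [hproj, Submodule.starProjection_apply, Submodule.coe_norm] using
    sum_norm_inner_sq_div_norm_sq_le hq horth (K.starProjection v)

end Bessel

namespace Matrix
variable {𝕜 m n : Type*} [RCLike 𝕜]

def toEuclideanSpace : Matrix m n 𝕜 ≃ₗ[𝕜] EuclideanSpace 𝕜 (m × n) where
  toFun A := WithLp.toLp 2 fun p => A p.1 p.2
  invFun x := of fun i j => x (i, j)
  map_add' _ _ := rfl
  map_smul' _ _ := rfl
  left_inv _ := rfl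
  right_inv _ := rfl

variable [Fintype m] [Fintype n]

theorem inner_toEuclideanSpace (A B : Matrix m n 𝕜) :
    inner 𝕜 (toEuclideanSpace A) (toEuclideanSpace B) = trace (Aᴴ * B) := by
  simp only [PiLp.inner_apply, RCLike.inner_apply, trace, diag_apply, mul_apply,
    conjTranspose_apply, Fintype.sum_prod_type, toEuclideanSpace, RCLike.star_def, mul_comm]
  exact Finset.sum_comm

variable [DecidableEq n]

theorem trace_conjTranspose_conj_mul_conj {U : Matrix n n 𝕜} (hU : U * Uᴴ = 1)
    (A B : Matrix n n 𝕜) :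
    trace ((Uᴴ * A * U)ᴴ * (Uᴴ * B * U)) = trace (Aᴴ * B) := by
  have hconj : (Uᴴ * A * U)ᴴ * (Uᴴ * B * U) = Uᴴ * (Aᴴ * B) * U := by
    simp only [conjTranspose_mul, conjTranspose_conjTranspose, Matrix.mul_assoc,
      ← Matrix.mul_assoc U Uᴴ, hU, Matrix.one_mul]
  rw [hconj, trace_mul_cycle, ← Matrix.mul_assoc, hU, Matrix.one_mul]

noncomputable def conjEuclideanSpace (U : Matrix n n 𝕜) (hU : Uᴴ * U = 1) :
    EuclideanSpace 𝕜 (n × n) →ₗᵢ[𝕜] EuclideanSpace 𝕜 (n × n) :=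
  (toEuclideanSpace.conj (mulLeftLinearMap n 𝕜 Uᴴ ∘ₗ mulRightLinearMap n 𝕜 U)).isometryOfInner
    (toEuclideanSpace.surjective.forall₂.2 fun A B => by
      simp only [LinearEquiv.conj_apply, LinearMap.comp_apply, LinearEquiv.coe_coe,
        LinearEquiv.symm_apply_apply, mulLeftLinearMap_apply, mulRightLinearMap_apply,
        inner_toEuclideanSpace]
      rw [← Matrix.mul_assoc Uᴴ A U, ← Matrix.mul_assoc Uᴴ B U]
      exact trace_conjTranspose_conj_mul_conj (mul_eq_one_comm.1 hU) A B)

theorem conjEuclideanSpace_apply {U : Matrix n n 𝕜} (hU : Uᴴ * U = 1) (A : Matrix n n 𝕜) :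
    conjEuclideanSpace U hU (toEuclideanSpace A) = toEuclideanSpace (Uᴴ * A * U) := by
  simp [conjEuclideanSpace, LinearEquiv.conj_apply, Matrix.mul_assoc]

theorem iterate_conjEuclideanSpace_apply {U : Matrix n n 𝕜} (hU : Uᴴ * U = 1)
    (A : Matrix n n 𝕜) (τ : ℕ) :
    (conjEuclideanSpace U hU)^[τ] (toEuclideanSpace A) =
      toEuclideanSpace (Uᴴ ^ τ * A * U ^ τ) := by
  induction τ with
  | zero => simp
  | succ τ ih =>
    rw [Function.iterate_succ_apply', ih, conjEuclideanSpace_apply, pow_succ', pow_succ]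
    simp only [Matrix.mul_assoc]

end Matrix

theorem hsInner_eq_inner_div (d : ℕ) (A B : Matrix (Fin d) (Fin d) ℂ) :
    hsInner d A B = inner ℂ (toEuclideanSpace A) (toEuclideanSpace B) / d := by
  rw [hsInner, inner_toEuclideanSpace]

theorem re_hsInner (d : ℕ) (A B : Matrix (Fin d) (Fin d) ℂ) :
    (hsInner d A B).re = (inner ℂ (toEuclideanSpace A) (toEuclideanSpace B)).re / d := by
  rw [hsInner_eq_inner_div, Complex.div_natCast_re]

theorem norm_hsInner_sq_div_re_hsInner_self {d : ℕ} (hd : 0 < d) (A B : Matrix (Fin d) (Fin d) ℂ) :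
    ‖hsInner d A B‖ ^ 2 / (hsInner d B B).re =
      ‖inner ℂ (toEuclideanSpace A) (toEuclideanSpace B)‖ ^ 2 / ‖toEuclideanSpace B‖ ^ 2 / d := by
  rw [re_hsInner, ← RCLike.re_to_complex, inner_self_eq_norm_sq, hsInner_eq_inner_div, norm_div,
    Complex.norm_natCast]
  field_simp

theorem mazur_bound_time_average (d k : ℕ) (hd : 0 < d)
    (U J : Matrix (Fin d) (Fin d) ℂ) (hU : Uᴴ * U = 1)
    (Q : Fin k → Matrix (Fin d) (Fin d) ℂ)
    (hcons : ∀ i, Uᴴ * Q i * U = Q i)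
    (hnz : ∀ i, Q i ≠ 0)
    (horth : ∀ i j, i ≠ j → hsInner d (Q i) (Q j) = 0) :
    ∃ L : ℝ,
      Tendsto (fun t : ℕ =>
          (1 / (t : ℝ)) * ∑ τ ∈ Finset.Icc 1 t,
            (hsInner d J ((Uᴴ) ^ τ * J * U ^ τ)).re)
        atTop (nhds L)
      ∧ ∑ i, ‖hsInner d J (Q i)‖ ^ 2 / (hsInner d (Q i) (Q i)).re ≤ L := by
  set T := (conjEuclideanSpace U hU).toContinuousLinearMap
  set K := T.eqLocus (1 : EuclideanSpace ℂ (Fin d × Fin d) →L[ℂ] EuclideanSpace ℂ (Fin d × Fin d))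
  have hQK : ∀ i, toEuclideanSpace (Q i) ∈ K := fun i => by
    simp [K, T, conjEuclideanSpace_apply, hcons i]
  have hQ : ∀ i, toEuclideanSpace (Q i) ≠ 0 := fun i => by simpa using hnz i
  have hQorth : Pairwise fun i j => inner ℂ (toEuclideanSpace (Q i)) (toEuclideanSpace (Q j)) = 0 :=
    fun i j hij => by simpa [hsInner_eq_inner_div, hd.ne'] using horth i j hij
  refine ⟨‖K.orthogonalProjectionOnto (toEuclideanSpace J)‖ ^ 2 / d, ?_, ?_⟩
  · simpa only [one_div, re_hsInner, ← iterate_conjEuclideanSpace_apply hU, ← Finset.sum_div,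
      mul_div_assoc, T, LinearIsometry.coe_toContinuousLinearMap, RCLike.re_to_complex] using
      (T.tendsto_cesaro_re_inner_iterate (conjEuclideanSpace U hU).norm_toContinuousLinearMap_le
        (toEuclideanSpace J)).div_const (d : ℝ)
  · simpa only [norm_hsInner_sq_div_re_hsInner_self hd, ← Finset.sum_div] using
      div_le_div_of_nonneg_right (sum_norm_inner_sq_div_norm_sq_le_norm_orthogonalProjectionOnto_sq
        K hQK hQ hQorth (toEuclideanSpace J)) d.cast_nonneg
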